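/- arXiv:1909.12839 — 2 statements merged into one kernel-verified Lean document; each statement's English description precedes it below -/
import Mathlib

section
/- For every n ≥ 1, n divides the number of spanning trees of the n-cube graph C_n. -/
open Finset

/-- The `n`-cube graph: vertices are the points of `(ℤ/2ℤ)^n`, with two vertices
adjacent iff they differ in exactly one coordinate (Hamming distance 1). -/
def cubeGraph (n : ℕ) : SimpleGraph (Fin n → ZMod 2) where
  Adj x y := hammingDist x y = 1
  symm := ⟨fun x y h => by simpa [hammingDist_comm] using h⟩
  loopless := ⟨fun x h => by simp [hammingDist_self] at h⟩

/-- The number of spanning trees of a graph: the cardinality of the set of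
subgraphs that contain every vertex and are trees. -/
noncomputable def spanningTreeCount {V : Type*} (G : SimpleGraph V) : ℕ :=
  Nat.card {H : G.Subgraph // H.IsSpanning ∧ H.coe.IsTree}

/-!
Let `ℤ/n` act on `C_n` by cyclically rotating coordinates, hence on its spanning trees. Every
rotation fixes the vertices `0` and `1 = (1, …, 1)`, so a rotation `g` fixing a spanning tree `T`
maps the unique `0`–`1` path of `T` onto itself and therefore fixes its first step `e_i`; this
forces `g = 1`. The action on spanning trees is thus free, and `n` divides their number.
-/

namespace SimpleGraph

variable {V Γ : Type*}

theorem IsAcyclic.map_getVert_eq {T : SimpleGraph V} (hT : T.IsAcyclic) {f : T →g T}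
    (hf : Function.Injective f) {u v : V} (hu : f u = u) (hv : f v = v) {p : T.Walk u v}
    (hp : p.IsPath) (k : ℕ) : f (p.getVert k) = p.getVert k := by
  have hq : ((p.map f).copy hu hv).IsPath := by simpa using hp.map hf
  have hpq : (p.map f).copy hu hv = p :=
    congrArg Subtype.val <| (hT.subsingleton_path u v).elim ⟨_, hq⟩ ⟨p, hp⟩
  rw [← Walk.getVert_map, ← Walk.getVert_copy _ _ hu hv, hpq]

theorem spanningTreeCount_eq_card (G : SimpleGraph V) :
    spanningTreeCount G = Nat.card {T : SimpleGraph V // T ≤ G ∧ T.IsTree} :=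
  Nat.card_congr
    { toFun H := ⟨H.1.spanningCoe, H.1.spanningCoe_le,
        (H.1.spanningCoeEquivCoeOfSpanning H.2.1).isTree_iff.2 H.2.2⟩
      invFun T := ⟨toSubgraph T.1 T.2.1, toSubgraph.isSpanning _ _,
        (Subgraph.spanningCoeEquivCoeOfSpanning _ (toSubgraph.isSpanning _ _)).isTree_iff.1 T.2.2⟩
      left_inv H := Subtype.ext <| Subgraph.ext (H.2.1.verts_eq_univ.symm) rfl
      right_inv _ := rfl }

variable [Group Γ] [MulAction Γ V]

instance : SMul Γ (SimpleGraph V) where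
  smul g G := G.comap (g⁻¹ • ·)

@[simp]
theorem smul_adj (g : Γ) (G : SimpleGraph V) (x y : V) :
    (g • G).Adj x y ↔ G.Adj (g⁻¹ • x) (g⁻¹ • y) := Iff.rfl

instance : MulAction Γ (SimpleGraph V) where
  one_smul G := by ext; simp
  mul_smul g h G := by ext; simp [mul_smul]

theorem IsTree.smul {T : SimpleGraph V} (hT : T.IsTree) (g : Γ) : (g • T).IsTree :=
  (Iso.comap (MulAction.toPerm g⁻¹) T).isTree_iff.2 hT

def spanningTrees (G : SimpleGraph V) (hG : ∀ g : Γ, g • G = G) :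
    SubMulAction Γ (SimpleGraph V) where
  carrier := {T | T ≤ G ∧ T.IsTree}
  smul_mem' g _ hT := ⟨hG g ▸ fun _ _ h ↦ hT.1 h, hT.2.smul g⟩

theorem IsTree.eq_one_of_smul_eq {G T : SimpleGraph V} (hT : T.IsTree) (hTG : T ≤ G) {u v : V}
    (huv : u ≠ v) {g : Γ} (hu : g • u = u) (hv : g • v = v)
    (hfree : ∀ w, G.Adj u w → g • w = w → g = 1) (hg : g • T = T) : g = 1 := by
  obtain ⟨p, hp, -⟩ := hT.existsUnique_path u v
  let f : T →g T := ⟨(g • ·), fun {x y} h ↦ by rw [← hg]; simpa using h⟩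
  exact hfree _ (hTG (p.adj_snd (Walk.not_nil_of_ne huv)))
    (hT.isAcyclic.map_getVert_eq (f := f) (MulAction.injective g) hu hv hp 1)

theorem card_dvd_spanningTreeCount {G : SimpleGraph V} (hG : ∀ g : Γ, g • G = G) {u v : V}
    (huv : u ≠ v) (hu : ∀ g : Γ, g • u = u) (hv : ∀ g : Γ, g • v = v)
    (hfree : ∀ (g : Γ) w, G.Adj u w → g • w = w → g = 1) :
    Nat.card Γ ∣ spanningTreeCount G := by
  have hstab (T : spanningTrees G hG) : MulAction.stabilizer Γ T = ⊥ :=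
    (Subgroup.eq_bot_iff_forall _).2 fun g hg ↦
      T.2.2.eq_one_of_smul_eq T.2.1 huv (hu g) (hv g) (hfree g) (congrArg Subtype.val hg)
  rw [spanningTreeCount_eq_card]
  change Nat.card Γ ∣ Nat.card (spanningTrees G hG)
  rw [Nat.card_congr (MulAction.selfEquivOrbitsQuotientProd hstab), Nat.card_prod]
  exact dvd_mul_left _ _

end SimpleGraph

section Cube

-- `Γ` permutes coordinates: `(g • x) i = x (g⁻¹ • i)`.
attribute [local instance] arrowAction

variable {Γ : Type*} [Group Γ]

theorem hammingDist_arrowAction {ι β : Type*} [Fintype ι] [DecidableEq β] [MulAction Γ ι]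
    (g : Γ) (x y : ι → β) : hammingDist (g • x) (g • y) = hammingDist x y :=
  Finset.card_equiv (MulAction.toPerm g⁻¹) (by simp; exact fun _ ↦ Iff.rfl)

theorem eq_one_of_smul_eq_of_hammingNorm_eq_one {ι β : Type*} [Fintype ι] [Zero β]
    [DecidableEq β] [MulAction Γ ι] (hfree : ∀ (g : Γ) (i : ι), g • i = i → g = 1)
    {w : ι → β} (hw : hammingNorm w = 1) {g : Γ} (hg : g • w = w) : g = 1 := by
  obtain ⟨i, hi⟩ := Finset.card_eq_one.1 hw
  have hsupp (j : ι) : w j ≠ 0 ↔ j = i := by simpa using Finset.ext_iff.1 hi j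
  have hgi : w (g • i) ≠ 0 := by
    rw [← hg]
    change w (g⁻¹ • g • i) ≠ 0
    rw [inv_smul_smul, hsupp]
  exact hfree g i ((hsupp _).1 hgi)

variable {n : ℕ} [MulAction Γ (Fin n)]

theorem smul_cubeGraph (g : Γ) : g • cubeGraph n = cubeGraph n := by
  ext x y
  exact congrArg (· = 1) (hammingDist_arrowAction g⁻¹ x y) |>.to_iff

theorem card_dvd_spanningTreeCount_cubeGraph (hn : n ≠ 0)
    (hfree : ∀ (g : Γ) (i : Fin n), g • i = i → g = 1) :
    Nat.card Γ ∣ spanningTreeCount (cubeGraph n) := by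
  have hne : (0 : Fin n → ZMod 2) ≠ fun _ ↦ 1 := fun h ↦ zero_ne_one (congrFun h ⟨0, by omega⟩)
  refine SimpleGraph.card_dvd_spanningTreeCount smul_cubeGraph hne (fun _ ↦ rfl) (fun _ ↦ rfl)
    fun g w hw ↦ eq_one_of_smul_eq_of_hammingNorm_eq_one hfree ?_
  rwa [← hammingDist_zero_left]

end Cube

theorem cube_spanning_tree_count_dvd (n : ℕ) (hn : 1 ≤ n) :
    n ∣ spanningTreeCount (cubeGraph n) := by
  obtain ⟨m, rfl⟩ := Nat.exists_eq_add_of_le' hn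
  -- `Fin (m + 1)` acting on itself by addition rotates the coordinates cyclically.
  have hfree (g : Multiplicative (Fin (m + 1))) (i : Fin (m + 1)) (h : g • i = i) : g = 1 :=
    add_eq_right.1 h
  simpa using card_dvd_spanningTreeCount_cubeGraph (Nat.succ_ne_zero m) hfree
end

section
/- For every odd integer n ≥ 3, the following identity of natural numbers holds: 2^(2^(n−1) − n) · ∏_{a=1}^{(n−1)/2} (2·a·(n−a)·n)^(binomial(n,a)) = n^(2^(n−1) − 2) · 2^(2^n − n − 1) · ∏_{a=1}^{n} a^(binomial(n,a)). -/
/-!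
Write `n = 2m + 1`. By the symmetry `C(n, a) = C(n, n - a)`, the factors `(n - a) ^ C(n, a)` for
`a ≤ m` are exactly the factors of Stanley's product with `a > m`, so the cover product is
`∏_{a=1}^{n-1} a ^ C(n, a)` times `(2n) ^ (∑_{a=1}^{m} C(n, a))`, and this half binomial sum is
`2^(n-1) - 1`. What remains is bookkeeping of the exponents of `2` and `n`.
-/

open Finset

theorem sum_Icc_choose_odd_half (m : ℕ) :
    ∑ a ∈ Icc 1 m, (2 * m + 1).choose a = 2 ^ (2 * m) - 1 := by
  have h := Nat.sum_range_choose_halfway m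
  rw [range_eq_Ico, sum_eq_sum_Ico_succ_bot (Nat.succ_pos m), Nat.choose_zero_right, zero_add,
    Nat.succ_eq_add_one, Ico_add_one_right_eq_Icc] at h
  rw [pow_mul, show (2 : ℕ) ^ 2 = 4 from rfl]
  omega

theorem prod_Icc_mul_reflect {M : Type*} [CommMonoid M] (f : ℕ → M) (m : ℕ) :
    ∏ a ∈ Icc 1 m, f a * f (2 * m + 1 - a) = ∏ a ∈ Icc 1 (2 * m), f a := by
  have upper_half :
      ∏ a ∈ Ico 1 (m + 1), f (2 * m + 1 - a) = ∏ a ∈ Ico (m + 1) (2 * m + 1), f a := by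
    rw [prod_Ico_reflect f 1 (by omega)]
    congr 2; omega
  rw [prod_mul_distrib, ← Ico_add_one_right_eq_Icc, ← Ico_add_one_right_eq_Icc, upper_half,
    prod_Ico_consecutive f (by omega) (by omega)]

/-- The factor `2a(n - a)n` with `n = 2m + 1` is the spanning tree count `κ(B_{a,n-a})`. -/
theorem prod_Icc_cover_factors_eq (m : ℕ) :
    ∏ a ∈ Icc 1 m, (2 * a * (2 * m + 1 - a) * (2 * m + 1)) ^ (2 * m + 1).choose a =
      2 ^ (2 ^ (2 * m) - 1) * (2 * m + 1) ^ (2 ^ (2 * m) - 1) *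
        ∏ a ∈ Icc 1 (2 * m), a ^ (2 * m + 1).choose a := by
  set n := 2 * m + 1
  have split_factor : ∀ a ∈ Icc 1 m, (2 * a * (n - a) * n) ^ n.choose a =
      2 ^ n.choose a * n ^ n.choose a * (a ^ n.choose a * (n - a) ^ n.choose (n - a)) := by
    intro a ha
    rw [Nat.choose_symm (by simp at ha; omega)]
    simp only [mul_pow]
    ac_rfl
  rw [prod_congr rfl split_factor, prod_mul_distrib, prod_mul_distrib, prod_pow_eq_pow_sum,
    prod_pow_eq_pow_sum, sum_Icc_choose_odd_half,
    prod_Icc_mul_reflect (fun a ↦ a ^ n.choose a)]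

theorem cube_cover_formula_identity (n : ℕ) (hn : 3 ≤ n) (hodd : Odd n) :
    2 ^ (2 ^ (n - 1) - n) *
        ∏ a ∈ Finset.Icc 1 ((n - 1) / 2), (2 * a * (n - a) * n) ^ n.choose a =
      n ^ (2 ^ (n - 1) - 2) * 2 ^ (2 ^ n - n - 1) *
        ∏ a ∈ Finset.Icc 1 n, a ^ n.choose a := by
  obtain ⟨m, rfl⟩ := hodd
  rw [show (2 * m + 1 - 1) / 2 = m by omega, prod_Icc_cover_factors_eq,
    prod_Icc_succ_top (by omega), Nat.choose_self, pow_one, Nat.add_sub_cancel, pow_succ 2 (2 * m)]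
  set N := 2 ^ (2 * m)
  set P := ∏ a ∈ Icc 1 (2 * m), a ^ (2 * m + 1).choose a
  have hN : 2 * m + 1 ≤ N := Nat.lt_two_pow_self
  calc 2 ^ (N - (2 * m + 1)) * (2 ^ (N - 1) * (2 * m + 1) ^ (N - 1) * P)
      = 2 ^ (N - (2 * m + 1) + (N - 1)) * (2 * m + 1) ^ (N - 1) * P := by ring
    _ = 2 ^ (N * 2 - (2 * m + 1) - 1) * ((2 * m + 1) ^ (N - 2) * (2 * m + 1)) * P := by
      rw [← pow_succ (2 * m + 1), show N - 2 + 1 = N - 1 by omega,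
        show N - (2 * m + 1) + (N - 1) = N * 2 - (2 * m + 1) - 1 by omega]
    _ = _ := by ring
end
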